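/- Let (T, ∧, 𝕀) be a monogenic monoidal triangulated category, and let T′ be a pretriangulated category admitting arbitrary (small) coproducts equipped with a symmetric monoidal structure ∧′ with unit 𝕀′ such that for every object X the functors X ∧′ − and − ∧′ X preserve arbitrary coproducts and are triangulated. Let F : T → T′ be a triangulated functor preserving arbitrary coproducts, equipped with an oplax (comonoidal) structure: a morphism ε : F(𝕀) → 𝕀′ and maps φ_{A,B} : F(A ∧ B) → F(A) ∧′ F(B), natural in A and B, compatible with the shift in each variable, and satisfying the coherence diagrams. If φ_{𝕀,B} : F(𝕀 ∧ B) → F(𝕀) ∧′ F(B) is an isomorphism for every object B of T, then φ_{A,B} is an isomorphism for all objects A and B of T. -/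

import Mathlib

/-!
STATEMENT 6: Let `(T, ∧, 𝕀)` be a monogenic monoidal triangulated category and `T′` a
pretriangulated category with arbitrary coproducts equipped with a bi-exact symmetric
monoidal structure `∧′` with unit `𝕀′`.  Let `F : T → T′` be a triangulated functor
preserving arbitrary coproducts, equipped with an oplax (comonoidal) structure
`ε : F 𝕀 ⟶ 𝕀′`, `φ A B : F (A ∧ B) ⟶ F A ∧′ F B` natural in both variables, compatible
with the shift in each variable and satisfying the coherence diagrams.  If `φ 𝕀 B` is an
isomorphism for every `B`, then `φ A B` is an isomorphism for all `A` and `B`.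
-/

open CategoryTheory Category Limits Pretriangulated MonoidalCategory

universe v u

namespace Paper

variable {C : Type u} [Category.{v} C]

/-- The canonical map `⊕ᵢ Hom(G, Aᵢ) →+ Hom(G, ∐ᵢ Aᵢ)`. -/
noncomputable def coproductComparison [Preadditive C] (G : C) {ι : Type v} (A : ι → C)
    [HasCoproduct A] : DirectSum ι (fun i => G ⟶ A i) →+ (G ⟶ ∐ A) :=
  letI := Classical.decEq ι
  DirectSum.toAddMonoid fun i =>
    AddMonoidHom.mk' (fun g => g ≫ Sigma.ι A i) fun _ _ => Preadditive.add_comp _ _ _ _ _ _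

/-- An object `G` is small if for every family of objects admitting a coproduct, the
canonical map `⊕ᵢ Hom(G, Aᵢ) → Hom(G, ∐ᵢ Aᵢ)` is an isomorphism (bijective). -/
def IsSmallObject [Preadditive C] (G : C) : Prop :=
  ∀ ⦃ι : Type v⦄ (A : ι → C) [HasCoproduct A], Function.Bijective (coproductComparison G A)

/-- An object `G` is a weak generator if a map `f : X ⟶ Y` is an isomorphism exactly when
`Hom(G⟦n⟧, X) → Hom(G⟦n⟧, Y)` is bijective for all integers `n`. -/
def IsWeakGenerator [HasShift C ℤ] (G : C) : Prop :=
  ∀ ⦃X Y : C⦄ (f : X ⟶ Y),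
    IsIso f ↔ ∀ n : ℤ, Function.Bijective fun g : G⟦n⟧ ⟶ X => g ≫ f

end Paper

/-!
For fixed `B`, the maps `φ A B` are the components of a natural transformation
`(- ∧ B) ⋙ F ⟶ F ⋙ (- ∧′ F B)` between coproduct-preserving triangulated functors which commutes
with the shifts, so the objects at which it is invertible form a localizing subcategory
containing `𝕀`. Such a subcategory is everything: each `X` is the homotopy colimit of a tower
`Y₀ → Y₁ → ⋯` over `X`, where `Y₀` is a coproduct of shifts of `𝕀` mapping onto every
`𝕀⟦n⟧ ⟶ X` and `Yₖ₊₁` is the cone of a map from such a coproduct killing the kernel of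
`Hom(𝕀⟦n⟧, Yₖ) → Hom(𝕀⟦n⟧, X)`. Since `𝕀⟦n⟧` is small, `Hom(𝕀⟦n⟧, -)` turns the homotopy
colimit into the colimit of the `Hom(𝕀⟦n⟧, Yₖ)`, which maps bijectively to `Hom(𝕀⟦n⟧, X)`.
-/

open scoped DirectSum

namespace DirectSum

variable {β : ULift.{v} ℕ → Type*} [∀ k, AddCommMonoid (β k)]

def shiftAlong (f : ∀ k : ℕ, β ⟨k⟩ →+ β ⟨k + 1⟩) : (⨁ k, β k) →+ ⨁ k, β k :=
  toAddMonoid fun k => (of β ⟨k.down + 1⟩).comp (f k.down)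

variable (f : ∀ k : ℕ, β ⟨k⟩ →+ β ⟨k + 1⟩)

@[simp]
lemma shiftAlong_of (k : ℕ) (a : β ⟨k⟩) : shiftAlong f (of β ⟨k⟩ a) = of β ⟨k + 1⟩ (f k a) :=
  toAddMonoid_of _ _ _

lemma shiftAlong_apply_zero (x : ⨁ k, β k) : shiftAlong f x ⟨0⟩ = 0 := by
  induction x using DirectSum.induction_on with
  | zero => simp
  | of i a =>
    obtain ⟨i⟩ := i
    rw [shiftAlong_of]
    exact of_eq_of_ne _ _ _ (by simp)
  | add x y hx hy => simp [hx, hy]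

lemma shiftAlong_apply_succ (x : ⨁ k, β k) (k : ℕ) :
    shiftAlong f x ⟨k + 1⟩ = f k (x ⟨k⟩) := by
  induction x using DirectSum.induction_on with
  | zero => simp
  | of i a =>
    obtain ⟨i⟩ := i
    rw [shiftAlong_of]
    by_cases h : i = k
    · subst h
      simp
    · rw [of_eq_of_ne _ _ _ (by simpa using Ne.symm h), of_eq_of_ne _ _ _ (by simpa using Ne.symm h),
        map_zero]
  | add x y hx hy => simp [hx, hy]

lemma eq_zero_of_shiftAlong_eq_self {x : ⨁ k, β k} (hx : shiftAlong f x = x) : x = 0 := by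
  ext ⟨k⟩
  induction k with
  | zero => rw [← hx, shiftAlong_apply_zero, zero_apply]
  | succ k ih => rw [← hx, shiftAlong_apply_succ, ih, zero_apply, map_zero, zero_apply]

end DirectSum

namespace Paper

variable {C : Type u} [Category.{v} C]

section Small

variable [Preadditive C]

lemma coproductComparison_of (G : C) {ι : Type v} [DecidableEq ι] (A : ι → C)
    [HasCoproduct A] (i : ι) (g : G ⟶ A i) :
    coproductComparison G A (DirectSum.of _ i g) = g ≫ Sigma.ι A i := by
  unfold coproductComparison
  convert DirectSum.toAddMonoid_of (β := fun i => G ⟶ A i) _ i g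
  rfl

lemma IsSmallObject.of_adjunction {D : Type*} [Category.{v} D] [Preadditive D]
    [HasCoproducts.{v} C] {L : C ⥤ D} {R : D ⥤ C} (adj : L ⊣ R) [L.Additive]
    [∀ ι : Type v, PreservesColimitsOfShape (Discrete ι) R] {G : C}
    (hG : IsSmallObject G) : IsSmallObject (L.obj G) := by
  intro ι A _
  classical
  let e := DFinsupp.mapRange.addEquiv fun i => adj.homAddEquiv G (A i)
  have hcomm : coproductComparison (L.obj G) A =
      (adj.homAddEquiv G (∐ A)).symm.toAddMonoidHom.comp
        ((Preadditive.rightComp G (sigmaComparison R A)).comp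
          ((coproductComparison G (fun i => R.obj (A i))).comp e.toAddMonoidHom)) := by
    refine DirectSum.addHom_ext fun i g => (adj.homAddEquiv G (∐ A)).injective ?_
    have he : e (DirectSum.of _ i g) = DirectSum.of _ i (adj.homEquiv G (A i) g) :=
      DFinsupp.mapRange_single (hf := fun i => map_zero _)
    simp [he, coproductComparison_of, Adjunction.homEquiv_unit, Preadditive.rightComp]
  rw [hcomm]
  exact (adj.homAddEquiv G (∐ A)).symm.bijective.comp
    ((asIso (sigmaComparison R A)).homToEquiv.bijective.comp ((hG _).comp e.bijective))

lemma IsSmallObject.shift [HasShift C ℤ] [∀ n : ℤ, (shiftFunctor C n).Additive]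
    [HasCoproducts.{v} C] {G : C} (hG : IsSmallObject G) (n : ℤ) :
    IsSmallObject (G⟦n⟧ : C) :=
  hG.of_adjunction (L := shiftFunctor C n) (shiftEquiv C n).toAdjunction

end Small

section Telescope

variable [HasCoproducts.{v} C] {Y : ULift.{v} ℕ → C}

/-- The cone of `𝟙 - telescopeShift j` is the homotopy colimit of the sequence `j`; the sequence
is indexed by `ULift ℕ` so that its coproduct exists in `C`. -/
noncomputable def telescopeShift (j : ∀ k : ℕ, Y ⟨k⟩ ⟶ Y ⟨k + 1⟩) : ∐ Y ⟶ ∐ Y :=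
  Sigma.desc fun k => j k.down ≫ Sigma.ι Y ⟨k.down + 1⟩

@[simp]
lemma ι_telescopeShift (j : ∀ k : ℕ, Y ⟨k⟩ ⟶ Y ⟨k + 1⟩) (k : ℕ) :
    Sigma.ι Y ⟨k⟩ ≫ telescopeShift j = j k ≫ Sigma.ι Y ⟨k + 1⟩ :=
  Sigma.ι_desc _ _

lemma sigmaComparison_comp_map_telescopeShift {D : Type*} [Category.{v} D]
    [HasCoproducts.{v} D] (E : C ⥤ D) (j : ∀ k : ℕ, Y ⟨k⟩ ⟶ Y ⟨k + 1⟩) :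
    sigmaComparison E Y ≫ E.map (telescopeShift j) =
      telescopeShift (fun k => E.map (j k)) ≫ sigmaComparison E Y := by
  refine Sigma.hom_ext _ _ fun ⟨k⟩ => ?_
  rw [ι_comp_sigmaComparison_assoc, ← E.map_comp, ι_telescopeShift, E.map_comp, ← assoc,
    ι_telescopeShift, assoc, ι_comp_sigmaComparison]

variable {j : ∀ k : ℕ, Y ⟨k⟩ ⟶ Y ⟨k + 1⟩} {Z : C} {p : ∐ Y ⟶ Z}

lemma ι_comp_eq_of_telescopeShift_comp_eq (hp : telescopeShift j ≫ p = p) (k : ℕ) :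
    Sigma.ι Y ⟨k⟩ ≫ p = j k ≫ Sigma.ι Y ⟨k + 1⟩ ≫ p := by
  conv_lhs => rw [← hp, ← assoc, ι_telescopeShift, assoc]

lemma exists_comp_ι_comp_eq_of_le (hp : telescopeShift j ≫ p = p) {G : C} {N M : ℕ}
    (h : N ≤ M) (w : G ⟶ Y ⟨N⟩) :
    ∃ w' : G ⟶ Y ⟨M⟩, w ≫ Sigma.ι Y ⟨N⟩ ≫ p = w' ≫ Sigma.ι Y ⟨M⟩ ≫ p := by
  induction M, h using Nat.le_induction with
  | base => exact ⟨w, rfl⟩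
  | succ M _ ih =>
    obtain ⟨w', hw'⟩ := ih
    exact ⟨w' ≫ j M, by rw [hw', ι_comp_eq_of_telescopeShift_comp_eq hp, assoc]⟩

variable [Preadditive C]

lemma coproductComparison_comp_telescopeShift (G : C) (x : ⨁ k, G ⟶ Y k) :
    coproductComparison G Y x ≫ telescopeShift j =
      coproductComparison G Y
        (DirectSum.shiftAlong (fun k => Preadditive.rightComp G (j k)) x) := by
  classical
  induction x using DirectSum.induction_on with
  | zero => simp
  | of i a =>
    obtain ⟨i⟩ := i
    simp [coproductComparison_of, Preadditive.rightComp]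
  | add x y hx hy => simp [hx, hy, Preadditive.add_comp]

lemma eq_zero_of_comp_one_sub_telescopeShift {G : C} (hG : IsSmallObject G) {g : G ⟶ ∐ Y}
    (hg : g ≫ (𝟙 _ - telescopeShift j) = 0) : g = 0 := by
  obtain ⟨x, rfl⟩ := (hG _).2 g
  rw [Preadditive.comp_sub, comp_id, sub_eq_zero, coproductComparison_comp_telescopeShift] at hg
  rw [DirectSum.eq_zero_of_shiftAlong_eq_self _ ((hG _).1 hg.symm), map_zero]

lemma exists_coproductComparison_comp_eq (hp : telescopeShift j ≫ p = p) {G : C}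
    (x : ⨁ k, G ⟶ Y k) : ∃ (N : ℕ) (w : G ⟶ Y ⟨N⟩),
      coproductComparison G Y x ≫ p = w ≫ Sigma.ι Y ⟨N⟩ ≫ p := by
  classical
  induction x using DirectSum.induction_on with
  | zero => exact ⟨0, 0, by simp⟩
  | of i a => exact ⟨i.down, a, by rw [coproductComparison_of, assoc]⟩
  | add x y hx hy =>
    obtain ⟨N₁, w₁, h₁⟩ := hx
    obtain ⟨N₂, w₂, h₂⟩ := hy
    obtain ⟨w₁', h₁'⟩ := exists_comp_ι_comp_eq_of_le hp (le_max_left N₁ N₂) w₁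
    obtain ⟨w₂', h₂'⟩ := exists_comp_ι_comp_eq_of_le hp (le_max_right N₁ N₂) w₂
    exact ⟨max N₁ N₂, w₁' + w₂', by
      rw [map_add, Preadditive.add_comp, h₁, h₂, h₁', h₂', Preadditive.add_comp]⟩

end Telescope

section Pretriangulated

variable [HasZeroObject C] [HasShift C ℤ] [Preadditive C] [∀ n : ℤ, (shiftFunctor C n).Additive]
  [Pretriangulated C] [HasCoproducts.{v} C] {Y : ULift.{v} ℕ → C}
  {j : ∀ k : ℕ, Y ⟨k⟩ ⟶ Y ⟨k + 1⟩} {Z : C} {p : ∐ Y ⟶ Z} {δ : Z ⟶ (∐ Y)⟦(1 : ℤ)⟧}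

lemma telescopeShift_comp_eq (hT : Triangle.mk (𝟙 _ - telescopeShift j) p δ ∈ distTriang C) :
    telescopeShift j ≫ p = p := by
  have h : (𝟙 _ - telescopeShift j) ≫ p = 0 := comp_distTriang_mor_zero₁₂ _ hT
  rwa [Preadditive.sub_comp, id_comp, sub_eq_zero, eq_comm] at h

lemma comp_δ_eq_zero_of_isSmallObject
    (hT : Triangle.mk (𝟙 _ - telescopeShift j) p δ ∈ distTriang C) {G : C}
    (hG : IsSmallObject G) (g : G ⟶ Z) : g ≫ δ = 0 := by
  let E := shiftFunctor C (1 : ℤ)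
  let c := sigmaComparison E Y
  have hc : (𝟙 _ - telescopeShift fun k => E.map (j k)) =
      (c ≫ E.map (𝟙 _ - telescopeShift j)) ≫ inv c := by
    rw [IsIso.eq_comp_inv, E.map_sub, E.map_id, Preadditive.comp_sub, Preadditive.sub_comp,
      sigmaComparison_comp_map_telescopeShift, id_comp, comp_id]
  have hδ : δ ≫ E.map (𝟙 _ - telescopeShift j) = 0 := comp_distTriang_mor_zero₃₁ _ hT
  have : g ≫ δ ≫ inv c = 0 :=
    eq_zero_of_comp_one_sub_telescopeShift (j := fun k => E.map (j k)) hG (by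
      simp only [hc, assoc, IsIso.inv_hom_id_assoc, reassoc_of% hδ, zero_comp, comp_zero])
  simpa using this =≫ c

lemma exists_eq_comp_ι_comp_of_isSmallObject
    (hT : Triangle.mk (𝟙 _ - telescopeShift j) p δ ∈ distTriang C) {G : C}
    (hG : IsSmallObject G) (g : G ⟶ Z) :
    ∃ (N : ℕ) (w : G ⟶ Y ⟨N⟩), g = w ≫ Sigma.ι Y ⟨N⟩ ≫ p := by
  obtain ⟨h, rfl⟩ := Triangle.coyoneda_exact₃ _ hT g (comp_δ_eq_zero_of_isSmallObject hT hG g)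
  obtain ⟨x, rfl⟩ := (hG Y).2 h
  exact exists_coproductComparison_comp_eq (telescopeShift_comp_eq hT) x

end Pretriangulated

section Generation

variable [HasZeroObject C] [HasShift C ℤ] [Preadditive C] [∀ n : ℤ, (shiftFunctor C n).Additive]
  [Pretriangulated C] [HasCoproducts.{v} C]

structure IsLocalizingContaining (P : ObjectProperty C) (G : C) : Prop where
  of_iso {X Y : C} : (X ≅ Y) → P X → P Y
  shift (n : ℤ) : P (G⟦n⟧)
  sigma {ι : Type v} (A : ι → C) : (∀ i, P (A i)) → P (∐ A)
  ext₃ (T : Triangle C) : T ∈ distTriang C → P T.obj₁ → P T.obj₂ → P T.obj₃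

structure CellularTower (P : ObjectProperty C) (G X : C) where
  obj : ℕ → C
  map (k : ℕ) : obj k ⟶ obj (k + 1)
  π (k : ℕ) : obj k ⟶ X
  prop (k : ℕ) : P (obj k)
  map_π (k : ℕ) : map k ≫ π (k + 1) = π k
  exists_lift (n : ℤ) (g : G⟦n⟧ ⟶ X) : ∃ g' : G⟦n⟧ ⟶ obj 0, g' ≫ π 0 = g
  map_eq_zero (k : ℕ) (n : ℤ) (g : G⟦n⟧ ⟶ obj k) : g ≫ π k = 0 → g ≫ map k = 0

namespace IsLocalizingContaining

variable {P : ObjectProperty C} {G : C}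

lemma exists_cover (hP : IsLocalizingContaining P G) (X : C) :
    ∃ (Y : C) (π : Y ⟶ X), P Y ∧ ∀ (n : ℤ) (g : G⟦n⟧ ⟶ X), ∃ g' : G⟦n⟧ ⟶ Y, g' ≫ π = g :=
  ⟨∐ fun g : Σ n : ℤ, G⟦n⟧ ⟶ X => G⟦g.1⟧, Sigma.desc fun g => g.2,
    hP.sigma _ fun g => hP.shift g.1,
    fun n g => ⟨Sigma.ι (fun g : Σ n : ℤ, G⟦n⟧ ⟶ X => G⟦g.1⟧) ⟨n, g⟩, Sigma.ι_desc _ _⟩⟩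

lemma exists_kill_kernel (hP : IsLocalizingContaining P G) {X Y : C} (π : Y ⟶ X)
    (hY : P Y) : ∃ (Y' : C) (j : Y ⟶ Y') (π' : Y' ⟶ X), P Y' ∧ j ≫ π' = π ∧
      ∀ (n : ℤ) (g : G⟦n⟧ ⟶ Y), g ≫ π = 0 → g ≫ j = 0 := by
  let k : (∐ fun g : Σ n : ℤ, {g : G⟦n⟧ ⟶ Y // g ≫ π = 0} => G⟦g.1⟧) ⟶ Y :=
    Sigma.desc fun g => g.2.1
  obtain ⟨Y', j, δ, hT⟩ := distinguished_cocone_triangle k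
  have hk : k ≫ π = 0 := Sigma.hom_ext _ _ fun g => by simpa [k] using g.2.2
  obtain ⟨π', hπ'⟩ := Triangle.yoneda_exact₂ _ hT π hk
  refine ⟨Y', j, π', hP.ext₃ _ hT (hP.sigma _ fun g => hP.shift g.1) hY, hπ'.symm,
    fun n g hg => ?_⟩
  have hkj : k ≫ j = 0 := comp_distTriang_mor_zero₁₂ _ hT
  have hgk : Sigma.ι _ ⟨n, g, hg⟩ ≫ k = g := Sigma.ι_desc _ _
  rw [← hgk, assoc, hkj, comp_zero]

lemma nonempty_cellularTower (hP : IsLocalizingContaining P G) (X : C) :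
    Nonempty (CellularTower P G X) := by
  obtain ⟨Y₀, π₀, hY₀, hlift⟩ := hP.exists_cover X
  choose step j π' hstep hjπ' hker using fun (Y : C) (π : Y ⟶ X) (hY : P Y) =>
    hP.exists_kill_kernel π hY
  let tower : ℕ → Σ' (Y : C) (_ : Y ⟶ X), P Y := fun k =>
    Nat.rec ⟨Y₀, π₀, hY₀⟩ (fun _ t => ⟨step t.1 t.2.1 t.2.2, π' t.1 t.2.1 t.2.2, hstep ..⟩) k
  exact ⟨{
    obj k := (tower k).1
    map k := j (tower k).1 (tower k).2.1 (tower k).2.2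
    π k := (tower k).2.1
    prop k := (tower k).2.2
    map_π k := hjπ' ..
    exists_lift := hlift
    map_eq_zero k := hker _ _ _ }⟩

theorem prop_of_isWeakGenerator (hP : IsLocalizingContaining P G) (hG : IsSmallObject G)
    (hG' : IsWeakGenerator G) (X : C) : P X := by
  obtain ⟨T⟩ := hP.nonempty_cellularTower X
  let Y : ULift.{v} ℕ → C := fun k => T.obj k.down
  obtain ⟨Z, p, δ, hT⟩ := distinguished_cocone_triangle (𝟙 (∐ Y) - telescopeShift T.map)
  let π : ∐ Y ⟶ X := Sigma.desc fun k => T.π k.down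
  have hπ : (𝟙 _ - telescopeShift T.map) ≫ π = 0 := Sigma.hom_ext _ _ fun ⟨k⟩ => by
    rw [comp_zero, ← assoc, Preadditive.comp_sub, comp_id, ι_telescopeShift,
      Preadditive.sub_comp, assoc]
    simp [π, Y, T.map_π]
  obtain ⟨v, hv⟩ : ∃ v : Z ⟶ X, π = p ≫ v := Triangle.yoneda_exact₂ _ hT π hπ
  have hιv (k : ℕ) : Sigma.ι Y ⟨k⟩ ≫ p ≫ v = T.π k := by
    rw [← hv]; exact Sigma.ι_desc _ _
  have : IsIso v := (hG' v).2 fun n => by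
    refine ⟨(injective_iff_map_eq_zero (Preadditive.rightComp _ v)).2 fun g hg => ?_,
      fun g => ?_⟩
    · obtain ⟨N, w, rfl⟩ := exists_eq_comp_ι_comp_of_isSmallObject hT (hG.shift n) g
      have hw : w ≫ T.π N = 0 := by simpa [Preadditive.rightComp, hιv] using hg
      rw [ι_comp_eq_of_telescopeShift_comp_eq (telescopeShift_comp_eq hT),
        reassoc_of% (T.map_eq_zero N n w hw), zero_comp]
    · obtain ⟨g', rfl⟩ := T.exists_lift n g
      exact ⟨g' ≫ Sigma.ι Y ⟨0⟩ ≫ p, by simp [hιv]⟩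
  exact hP.of_iso (asIso v)
    (hP.ext₃ _ hT (hP.sigma _ fun k => T.prop _) (hP.sigma _ fun k => T.prop _))

end IsLocalizingContaining

end Generation

section NatTrans

variable {C D : Type*} [Category.{v} C] [Category.{v} D] {K₁ K₂ : C ⥤ D}

lemma isIso_app_sigma [HasCoproducts.{v} C] [HasCoproducts.{v} D] (τ : K₁ ⟶ K₂) {ι : Type v}
    (A : ι → C) [PreservesColimitsOfShape (Discrete ι) K₁]
    [PreservesColimitsOfShape (Discrete ι) K₂] [∀ i, IsIso (τ.app (A i))] :
    IsIso (τ.app (∐ A)) := by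
  have h : τ.app (∐ A) = inv (sigmaComparison K₁ A) ≫
      Limits.Sigma.map (fun i => τ.app (A i)) ≫ sigmaComparison K₂ A := by
    rw [IsIso.eq_inv_comp]
    refine Sigma.hom_ext _ _ fun i => ?_
    rw [ι_comp_sigmaComparison_assoc, τ.naturality, Sigma.ι_map_assoc, ι_comp_sigmaComparison]
  rw [h]
  infer_instance

variable [HasZeroObject C] [HasShift C ℤ] [Preadditive C] [∀ n : ℤ, (shiftFunctor C n).Additive]
  [Pretriangulated C] [HasZeroObject D] [HasShift D ℤ] [Preadditive D]
  [∀ n : ℤ, (shiftFunctor D n).Additive] [Pretriangulated D]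
  [K₁.CommShift ℤ] [K₂.CommShift ℤ] [K₁.IsTriangulated] [K₂.IsTriangulated]

lemma isIso_app_obj₃ (τ : K₁ ⟶ K₂) [NatTrans.CommShift τ ℤ] (T : Triangle C)
    (hT : T ∈ distTriang C) (h₁ : IsIso (τ.app T.obj₁)) (h₂ : IsIso (τ.app T.obj₂)) :
    IsIso (τ.app T.obj₃) :=
  isIso₃_of_isIso₁₂ (T := K₁.mapTriangle.obj T) (T' := K₂.mapTriangle.obj T)
    (Triangle.homMk _ _ (τ.app _) (τ.app _) (τ.app _) (τ.naturality T.mor₁)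
      (τ.naturality T.mor₂)
      (show (K₁.map T.mor₃ ≫ (K₁.commShiftIso (1 : ℤ)).hom.app T.obj₁) ≫ (τ.app T.obj₁)⟦1⟧' =
          τ.app T.obj₃ ≫ K₂.map T.mor₃ ≫ (K₂.commShiftIso (1 : ℤ)).hom.app T.obj₁ by
        rw [assoc, NatTrans.shift_app_comm, τ.naturality_assoc]))
    (K₁.map_distinguished T hT) (K₂.map_distinguished T hT) h₁ h₂

variable [HasCoproducts.{v} C] [HasCoproducts.{v} D]
  [∀ ι : Type v, PreservesColimitsOfShape (Discrete ι) K₁]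
  [∀ ι : Type v, PreservesColimitsOfShape (Discrete ι) K₂]

lemma isLocalizingContaining_isIso_app (τ : K₁ ⟶ K₂) [NatTrans.CommShift τ ℤ] {G : C}
    (hG : IsIso (τ.app G)) : IsLocalizingContaining (fun X => IsIso (τ.app X)) G where
  of_iso e h := (NatTrans.isIso_app_iff_of_iso τ e).1 h
  shift n := by rw [NatTrans.app_shift τ n]; infer_instance
  sigma A h := have := h; isIso_app_sigma τ A
  ext₃ := isIso_app_obj₃ τ

theorem isIso_of_isIso_app_of_isWeakGenerator (τ : K₁ ⟶ K₂) [NatTrans.CommShift τ ℤ] {G : C}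
    (hG : IsSmallObject G) (hG' : IsWeakGenerator G) (hτ : IsIso (τ.app G)) : IsIso τ :=
  have (X : C) : IsIso (τ.app X) :=
    (isLocalizingContaining_isIso_app τ hτ).prop_of_isWeakGenerator hG hG' X
  NatIso.isIso_of_isIso_app τ

end NatTrans

end Paper

open Paper

theorem statement_6
    -- `T` is a monogenic monoidal triangulated category:
    {C : Type u} [Category.{v} C] [HasZeroObject C] [HasShift C ℤ] [Preadditive C]
    [∀ n : ℤ, (shiftFunctor C n).Additive] [Pretriangulated C] [HasCoproducts.{v} C]
    [MonoidalCategory C] [SymmetricCategory C]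
    [∀ X : C, (tensorLeft X).Additive] [∀ X : C, (tensorRight X).Additive]
    [∀ X : C, (tensorLeft X).CommShift ℤ] [∀ X : C, (tensorRight X).CommShift ℤ]
    [∀ X : C, (tensorLeft X).IsTriangulated] [∀ X : C, (tensorRight X).IsTriangulated]
    (hCtensorL : ∀ (X : C) (ι : Type v), PreservesColimitsOfShape (Discrete ι) (tensorLeft X))
    (hCtensorR : ∀ (X : C) (ι : Type v), PreservesColimitsOfShape (Discrete ι) (tensorRight X))
    (hCunit_small : IsSmallObject (𝟙_ C)) (hCunit_gen : IsWeakGenerator (𝟙_ C))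
    -- `T′` is a pretriangulated category with a bi-exact symmetric monoidal structure:
    {D : Type u} [Category.{v} D] [HasZeroObject D] [HasShift D ℤ] [Preadditive D]
    [∀ n : ℤ, (shiftFunctor D n).Additive] [Pretriangulated D] [HasCoproducts.{v} D]
    [MonoidalCategory D] [SymmetricCategory D]
    [∀ X : D, (tensorLeft X).Additive] [∀ X : D, (tensorRight X).Additive]
    [∀ X : D, (tensorLeft X).CommShift ℤ] [∀ X : D, (tensorRight X).CommShift ℤ]
    [∀ X : D, (tensorLeft X).IsTriangulated] [∀ X : D, (tensorRight X).IsTriangulated]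
    (hDtensorL : ∀ (X : D) (ι : Type v), PreservesColimitsOfShape (Discrete ι) (tensorLeft X))
    (hDtensorR : ∀ (X : D) (ι : Type v), PreservesColimitsOfShape (Discrete ι) (tensorRight X))
    -- `F` is a triangulated functor preserving arbitrary coproducts:
    (F : C ⥤ D) [F.Additive] [F.CommShift ℤ] [F.IsTriangulated]
    (hF : ∀ ι : Type v, PreservesColimitsOfShape (Discrete ι) F)
    -- the oplax (comonoidal) structure on `F`:
    (ε : F.obj (𝟙_ C) ⟶ 𝟙_ D)
    (φ : ∀ A B : C, F.obj (A ⊗ B) ⟶ F.obj A ⊗ F.obj B)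
    (hφ_nat : ∀ {A A' B B' : C} (f : A ⟶ A') (g : B ⟶ B'),
      F.map (f ⊗ₘ g) ≫ φ A' B' = φ A B ≫ (F.map f ⊗ₘ F.map g))
    -- compatibility of `φ` with the shift in the second variable:
    (hφ_shift₂ : ∀ (n : ℤ) (A B : C),
      φ A (B⟦n⟧) ≫ (F.obj A ◁ (F.commShiftIso n).hom.app B) ≫
          ((tensorLeft (F.obj A)).commShiftIso n).hom.app (F.obj B) =
        F.map (((tensorLeft A).commShiftIso n).hom.app B) ≫
          (F.commShiftIso n).hom.app (A ⊗ B) ≫ (φ A B)⟦n⟧')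
    -- compatibility of `φ` with the shift in the first variable:
    (hφ_shift₁ : ∀ (n : ℤ) (A B : C),
      φ (A⟦n⟧) B ≫ ((F.commShiftIso n).hom.app A ▷ F.obj B) ≫
          ((tensorRight (F.obj B)).commShiftIso n).hom.app (F.obj A) =
        F.map (((tensorRight B).commShiftIso n).hom.app A) ≫
          (F.commShiftIso n).hom.app (A ⊗ B) ≫ (φ A B)⟦n⟧')
    -- the coherence diagrams of an oplax (symmetric) comonoidal functor:
    (hφ_assoc : ∀ A B Z : C,
      φ (A ⊗ B) Z ≫ (φ A B ⊗ₘ 𝟙 (F.obj Z)) ≫ (α_ (F.obj A) (F.obj B) (F.obj Z)).hom =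
        F.map (α_ A B Z).hom ≫ φ A (B ⊗ Z) ≫ (𝟙 (F.obj A) ⊗ₘ φ B Z))
    (hφ_left_unit : ∀ A : C,
      φ (𝟙_ C) A ≫ (ε ⊗ₘ 𝟙 (F.obj A)) ≫ (λ_ (F.obj A)).hom = F.map (λ_ A).hom)
    (hφ_right_unit : ∀ A : C,
      φ A (𝟙_ C) ≫ (𝟙 (F.obj A) ⊗ₘ ε) ≫ (ρ_ (F.obj A)).hom = F.map (ρ_ A).hom)
    (hφ_braided : ∀ A B : C,
      F.map (β_ A B).hom ≫ φ B A = φ A B ≫ (β_ (F.obj A) (F.obj B)).hom)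
    -- `φ 𝕀 B` is an isomorphism for every `B`:
    (hφ_unit : ∀ B : C, IsIso (φ (𝟙_ C) B)) :
    ∀ A B : C, IsIso (φ A B) := by
  intro A B
  let τ : tensorRight B ⋙ F ⟶ F ⋙ tensorRight (F.obj B) :=
    { app := fun A => φ A B
      naturality := fun _ _ f => by simpa using hφ_nat f (𝟙 B) }
  have : NatTrans.CommShift τ ℤ := ⟨fun n => by
    ext A
    simpa [τ, Functor.commShiftIso_comp_hom_app] using (hφ_shift₁ n A B).symm⟩
  have (ι : Type v) : PreservesColimitsOfShape (Discrete ι) (tensorRight B ⋙ F) :=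
    have := hCtensorR B ι; have := hF ι; inferInstance
  have (ι : Type v) : PreservesColimitsOfShape (Discrete ι) (F ⋙ tensorRight (F.obj B)) :=
    have := hDtensorR (F.obj B) ι; have := hF ι; inferInstance
  have := isIso_of_isIso_app_of_isWeakGenerator τ hCunit_small hCunit_gen (hφ_unit B)
  exact NatIso.isIso_app_of_isIso τ A
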